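/- Let C and D be convex bodies in ℝ². There exists a constant ρ > 0 (depending on C and D) such that for every n ≥ 2 and every packing C₁,…,Cₙ in D of positive homothets of C (Cᵢ = vᵢ + μᵢ • C, μᵢ > 0) in which every Cᵢ intersects the topological frontier of D, one has ∑ᵢ μᵢ ≤ ρ · log n. (This is Proposition 2: the total perimeter of a boundary-touching packing of homothets is O(log n).) -/

import Mathlib

/-!
A homothet `vᵢ + μᵢ • C` touching `∂D` lies in the strip of width `μᵢ (diam C + 1)` along `∂D`.
If `B(x, r) ⊆ D`, the homothetic copy of `D` with centre `x` and ratio `1 - t` keeps distance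
`t r` from `∂D`, so the strip of width `t r` has area at most `(1 - (1 - t)²) |D| ≤ 2 t |D|`.
Hence the homothets with factor in a dyadic range `(q/2, q]`, being disjoint of area `≥ (q/2)² |C|`,
number `O(1/q)` and contribute `O(1)` to `∑ μᵢ`. This also bounds every single factor by `O(1)`,
so only the `⌈log₂ n⌉` dyadic ranges below that bound matter, and the at most `n` factors below
them add up to one more `O(1)`.
-/

open MeasureTheory Metric Set Module Finset

open scoped Pointwise ENNReal

theorem image_add_smul_eq_vadd_smul {α β : Type*} [SMul α β] [Add β] (v : β) (a : α) (s : Set β) :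
    (fun x => v + a • x) '' s = v +ᵥ a • s := by
  rw [← Set.image_vadd, ← Set.image_smul, image_image]
  rfl

theorem Bornology.IsBounded.subset_thickening_of_diam_lt {X : Type*} [PseudoMetricSpace X]
    {A F : Set X} (hA : Bornology.IsBounded A) (hAF : (A ∩ F).Nonempty) {δ : ℝ} (h : diam A < δ) :
    A ⊆ thickening δ F := fun _ hy =>
  let ⟨_, hpA, hpF⟩ := hAF
  mem_thickening_iff.2 ⟨_, hpF, (dist_le_diam_of_mem hA hy hpA).trans_lt h⟩

theorem Finset.card_mul_le_measure_of_pairwiseDisjoint {α ι : Type*} [MeasurableSpace α]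
    (μ : Measure α) {s : Finset ι} {A : ι → Set α} {S : Set α} {m : ℝ≥0∞}
    (hd : (s : Set ι).PairwiseDisjoint A) (hA : ∀ i ∈ s, MeasurableSet (A i))
    (hAS : ∀ i ∈ s, A i ⊆ S) (hm : ∀ i ∈ s, m ≤ μ (A i)) : #s * m ≤ μ S :=
  calc #s * m = ∑ _i ∈ s, m := by rw [sum_const, nsmul_eq_mul]
    _ ≤ ∑ i ∈ s, μ (A i) := sum_le_sum hm
    _ = μ (⋃ i ∈ s, A i) := (measure_biUnion_finset hd hA).symm
    _ ≤ μ S := measure_mono (iUnion₂_subset hAS)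

theorem Finset.sum_le_clog_add_one_mul {ι : Type*} (s : Finset ι) (f : ι → ℝ) {B : ℝ}
    (hf : ∀ i ∈ s, 0 < f i) (hB : ∀ q > 0, ∑ i ∈ s with q / 2 < f i ∧ f i ≤ q, f i ≤ B) :
    ∑ i ∈ s, f i ≤ (Nat.clog 2 #s + 1) * B := by
  have hB0 : 0 ≤ B :=
    (sum_nonneg fun i hi => (hf i (mem_filter.1 hi).1).le).trans (hB 1 one_pos)
  have hfB : ∀ i ∈ s, f i ≤ B := fun i hi =>
    (single_le_sum (fun j hj => (hf j (mem_filter.1 hj).1).le)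
      (mem_filter.2 ⟨hi, half_lt_self (hf i hi), le_rfl⟩)).trans (hB _ (hf i hi))
  obtain rfl | hBpos := hB0.eq_or_lt
  · rw [eq_empty_of_forall_notMem fun i hi => (hf i hi).not_ge (hfB i hi)]
    simp
  have hhead : ∀ k : ℕ, ∑ i ∈ s with B / 2 ^ k < f i, f i ≤ k * B := by
    intro k
    induction k with
    | zero =>
      rw [filter_false_of_mem fun i hi => by simpa using hfB i hi]
      simp
    | succ k ih =>
      set q := B / 2 ^ k
      have hsplit : ∑ i ∈ s with B / 2 ^ (k + 1) < f i, f i =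
          ∑ i ∈ s with q < f i, f i + ∑ i ∈ s with q / 2 < f i ∧ f i ≤ q, f i := by
        rw [pow_succ, ← div_div, sum_filter, sum_filter, sum_filter, ← sum_add_distrib]
        refine sum_congr rfl fun i _ => ?_
        split_ifs <;> grind
      rw [hsplit]
      push_cast
      linarith [hB q (by positivity)]
  set K := Nat.clog 2 #s
  have htail : ∑ i ∈ s with ¬ B / 2 ^ K < f i, f i ≤ B :=
    calc ∑ i ∈ s with ¬ B / 2 ^ K < f i, f i ≤ #s * (B / 2 ^ K) := by
          refine (sum_le_card_nsmul _ _ _ fun i hi => not_lt.1 (mem_filter.1 hi).2).trans ?_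
          rw [nsmul_eq_mul]
          gcongr
          exact filter_subset _ _
      _ ≤ 2 ^ K * (B / 2 ^ K) := by
          gcongr
          exact_mod_cast Nat.le_pow_clog one_lt_two _
      _ = B := by field_simp
  rw [← sum_filter_add_sum_filter_not s (fun i => B / 2 ^ K < f i)]
  linarith [hhead K]

theorem Nat.clog_two_add_one_le_three_mul_logb {n : ℕ} (hn : 2 ≤ n) :
    (Nat.clog 2 n + 1 : ℝ) ≤ 3 * Real.logb 2 n := by
  have hlogb : 1 ≤ Real.logb 2 n := by
    rw [← Real.logb_self_eq_one one_lt_two]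
    exact Real.logb_le_logb_of_le one_lt_two two_pos (by exact_mod_cast hn)
  have hceil : (Nat.clog 2 n : ℝ) < Real.logb 2 n + 1 := by
    rw [← Real.natCeil_logb_natCast]
    exact_mod_cast Nat.ceil_lt_add_one (zero_le_one.trans hlogb)
  linarith

section HaarMeasure

variable {E : Type*} [NormedAddCommGroup E] [NormedSpace ℝ E]

theorem Convex.ball_subset_of_mem_image_homothety {D : Set E} (hD : Convex ℝ D) {x : E} {r : ℝ}
    (hball : ball x r ⊆ D) {t : ℝ} (ht0 : 0 < t) (ht1 : t ≤ 1) {y : E}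
    (hy : y ∈ AffineMap.homothety x (1 - t) '' D) : ball y (t * r) ⊆ D := by
  obtain ⟨z, hz, rfl⟩ := hy
  intro u hu
  set w := x + t⁻¹ • (u - AffineMap.homothety x (1 - t) z)
  have hw : w ∈ ball x r := by
    rw [mem_ball, dist_eq_norm, add_sub_cancel_left, norm_smul, norm_inv,
      Real.norm_of_nonneg ht0.le, inv_mul_lt_iff₀ ht0, ← dist_eq_norm]
    exact hu
  have hu_eq : u = (1 - t) • z + t • w := by
    simp only [w, AffineMap.homothety_apply, vsub_eq_sub, vadd_eq_add, smul_add, smul_smul,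
      mul_inv_cancel₀ ht0.ne', one_smul]
    module
  rw [hu_eq]
  exact hD hz (hball hw) (by linarith) ht0.le (by ring)

variable [MeasurableSpace E] [BorelSpace E] [FiniteDimensional ℝ E] (μ : Measure E)
  [μ.IsAddHaarMeasure]

theorem Convex.addHaar_inter_thickening_frontier_le [Nontrivial E] {D : Set E} (hD : Convex ℝ D)
    (hDfin : μ D ≠ ∞) {x : E} {r : ℝ} (hr : 0 < r) (hball : ball x r ⊆ D) {δ : ℝ} (hδ : 0 < δ) :
    μ (D ∩ Metric.thickening δ (frontier D)) ≤ ENNReal.ofReal (finrank ℝ E * δ / r) * μ D := by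
  rcases lt_or_ge r δ with hrδ | hδr
  · have hd : (1 : ℝ) ≤ finrank ℝ E := by exact_mod_cast finrank_pos
    calc μ (D ∩ Metric.thickening δ (frontier D)) ≤ 1 * μ D := by
          rw [one_mul]; exact measure_mono inter_subset_left
      _ ≤ ENNReal.ofReal (finrank ℝ E * δ / r) * μ D := by
          gcongr
          rw [← ENNReal.ofReal_one, ENNReal.ofReal_le_ofReal_iff (by positivity), one_le_div hr]
          nlinarith
  set t := δ / r
  have ht0 : 0 < t := by positivity
  have ht1 : t ≤ 1 := (div_le_one hr).mpr hδr
  set S := AffineMap.homothety x (1 - t) '' D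
  have hball_S : ∀ y ∈ S, ball y δ ⊆ D := fun y hy => by
    simpa [t, div_mul_cancel₀ _ hr.ne'] using hD.ball_subset_of_mem_image_homothety hball ht0 ht1 hy
  have hSD : S ⊆ D := fun y hy => hball_S y hy (mem_ball_self hδ)
  have hstrip : D ∩ Metric.thickening δ (frontier D) ⊆ D \ S := by
    rintro y ⟨hyD, hyT⟩
    refine ⟨hyD, fun hyS => ?_⟩
    obtain ⟨z, hz, hyz⟩ := mem_thickening_iff.mp hyT
    exact hz.2 <| isOpen_ball.subset_interior_iff.mpr (hball_S y hyS) (mem_ball_comm.mp hyz)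
  have hμS : μ S = ENNReal.ofReal ((1 - t) ^ finrank ℝ E) * μ D := by
    rw [Measure.addHaar_image_homothety, abs_of_nonneg (pow_nonneg (by linarith) _)]
  refine (measure_mono hstrip).trans ?_
  rw [measure_sdiff_le_iff_le_add ((hD.affine_image _).nullMeasurableSet μ) hSD
    (hμS ▸ ENNReal.mul_ne_top ENNReal.ofReal_ne_top hDfin), hμS, ← add_mul,
    ← ENNReal.ofReal_add (by positivity) (by positivity)]
  calc μ D = ENNReal.ofReal 1 * μ D := by rw [ENNReal.ofReal_one, one_mul]
    _ ≤ _ := by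
      gcongr
      have hbernoulli := one_add_mul_le_pow (a := -t) (by linarith) (finrank ℝ E)
      rw [← sub_eq_add_neg] at hbernoulli
      have hfac : (finrank ℝ E : ℝ) * δ / r = finrank ℝ E * t := by simp only [t]; ring
      linarith

theorem Convex.card_mul_addHaar_interior_le_of_frontier_touching [Nontrivial E] {D C : Set E}
    (hD : Convex ℝ D) (hDfin : μ D ≠ ∞) {x : E} {r : ℝ} (hr : 0 < r) (hball : ball x r ⊆ D)
    (hC : Bornology.IsBounded C) {ι : Type*} {s : Finset ι} {v : ι → E} {a : ι → ℝ} {q : ℝ}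
    (hq : 0 < q) (ha : ∀ i ∈ s, q / 2 < a i ∧ a i ≤ q) (hsub : ∀ i ∈ s, v i +ᵥ a i • C ⊆ D)
    (hdisj : (s : Set ι).PairwiseDisjoint fun i => interior (v i +ᵥ a i • C))
    (htouch : ∀ i ∈ s, ((v i +ᵥ a i • C) ∩ frontier D).Nonempty) :
    #s * (q / 2) ^ finrank ℝ E * μ.real (interior C) ≤
      finrank ℝ E * (q * (diam C + 1)) / r * μ.real D := by
  have hpos : ∀ i ∈ s, 0 < a i := fun i hi => (half_pos hq).trans (ha i hi).1
  have hinterior : ∀ i ∈ s, interior (v i +ᵥ a i • C) = v i +ᵥ a i • interior C := fun i hi => by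
    rw [interior_vadd, interior_smul₀ (hpos i hi).ne']
  have hstrip : ∀ i ∈ s, v i +ᵥ a i • C ⊆ D ∩ Metric.thickening (q * (diam C + 1)) (frontier D) :=
    fun i hi => subset_inter (hsub i hi) <| ((hC.smul₀ _).vadd _).subset_thickening_of_diam_lt
      (htouch i hi) <| by
        rw [diam_vadd, diam_smul₀, Real.norm_of_nonneg (hpos i hi).le]
        have := (ha i hi).2
        nlinarith [diam_nonneg (s := C), hpos i hi]
  have hcount := s.card_mul_le_measure_of_pairwiseDisjoint μ
    (m := ENNReal.ofReal ((q / 2) ^ finrank ℝ E) * μ (interior C)) hdisj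
    (fun i _ => isOpen_interior.measurableSet)
    (fun i hi => interior_subset.trans (hstrip i hi)) fun i hi => by
      rw [hinterior i hi, measure_vadd, Measure.addHaar_smul, abs_pow,
        abs_of_pos (hpos i hi)]
      gcongr
      exact (ha i hi).1.le
  have := ENNReal.toReal_mono (ENNReal.mul_ne_top ENNReal.ofReal_ne_top hDfin)
    (hcount.trans (hD.addHaar_inter_thickening_frontier_le μ hDfin hr hball (by positivity)))
  rw [ENNReal.toReal_mul, ENNReal.toReal_mul, ENNReal.toReal_mul, ENNReal.toReal_natCast,
    ENNReal.toReal_ofReal (by positivity), ENNReal.toReal_ofReal (by positivity)] at this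
  simpa only [Measure.real, mul_assoc] using this

theorem Convex.sum_pow_le_of_frontier_touching [Nontrivial E] {D C : Set E}
    (hD : Convex ℝ D) (hDfin : μ D ≠ ∞) {x : E} {r : ℝ} (hr : 0 < r) (hball : ball x r ⊆ D)
    (hC : Bornology.IsBounded C) (hc : 0 < μ.real (interior C)) {ι : Type*} {s : Finset ι}
    {v : ι → E} {a : ι → ℝ} {q : ℝ} (hq : 0 < q) (ha : ∀ i ∈ s, q / 2 < a i ∧ a i ≤ q)
    (hsub : ∀ i ∈ s, v i +ᵥ a i • C ⊆ D)
    (hdisj : (s : Set ι).PairwiseDisjoint fun i => interior (v i +ᵥ a i • C))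
    (htouch : ∀ i ∈ s, ((v i +ᵥ a i • C) ∩ frontier D).Nonempty) :
    ∑ i ∈ s, a i ^ (finrank ℝ E - 1) ≤
      2 ^ finrank ℝ E * finrank ℝ E * (diam C + 1) * μ.real D / (r * μ.real (interior C)) := by
  have hcard := hD.card_mul_addHaar_interior_le_of_frontier_touching μ hDfin hr hball hC hq ha
    hsub hdisj htouch
  obtain ⟨k, hk⟩ : ∃ k, finrank ℝ E = k + 1 := Nat.exists_eq_add_one.2 finrank_pos
  rw [hk] at hcard ⊢
  rw [Nat.add_sub_cancel]
  have hpos : ∀ i ∈ s, 0 < a i := fun i hi => (half_pos hq).trans (ha i hi).1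
  calc ∑ i ∈ s, a i ^ k ≤ #s * q ^ k := by
        simpa using
          sum_le_card_nsmul s _ _ fun i hi => pow_le_pow_left₀ (hpos i hi).le (ha i hi).2 k
    _ ≤ _ := by
      rw [le_div_iff₀ (by positivity)]
      refine le_of_mul_le_mul_right ?_ hq
      calc #s * q ^ k * (r * μ.real (interior C)) * q
          = 2 ^ (k + 1) * r * (#s * (q / 2) ^ (k + 1) * μ.real (interior C)) := by
            rw [div_pow]
            field_simp
            ring
        _ ≤ 2 ^ (k + 1) * r * ((k + 1 : ℕ) * (q * (diam C + 1)) / r * μ.real D) :=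
            mul_le_mul_of_nonneg_left hcard (by positivity)
        _ = _ := by
            field_simp

end HaarMeasure

theorem boundary_touching_packing_log_bound
    (C D : Set (EuclideanSpace ℝ (Fin 2)))
    (hCcpt : IsCompact C) (hCint : (interior C).Nonempty)
    (hDconv : Convex ℝ D) (hDcpt : IsCompact D) (hDint : (interior D).Nonempty) :
    ∃ ρ : ℝ, 0 < ρ ∧ ∀ n : ℕ, 2 ≤ n →
      ∀ (v : Fin n → EuclideanSpace ℝ (Fin 2)) (μ : Fin n → ℝ),
        (∀ i, 0 < μ i) →
        (∀ i, (fun x => v i + μ i • x) '' C ⊆ D) →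
        (∀ i j, i ≠ j →
          Disjoint (interior ((fun x => v i + μ i • x) '' C))
                   (interior ((fun x => v j + μ j • x) '' C))) →
        (∀ i, (((fun x => v i + μ i • x) '' C) ∩ frontier D).Nonempty) →
        ∑ i, μ i ≤ ρ * Real.log n := by
  obtain ⟨x₀, hx₀⟩ := hDint
  obtain ⟨r, hr, hball⟩ := isOpen_iff.mp isOpen_interior x₀ hx₀
  replace hball := hball.trans interior_subset
  have hc : 0 < volume.real (interior C) := ENNReal.toReal_pos
    (isOpen_interior.measure_pos volume hCint).ne'
    ((measure_mono interior_subset).trans_lt hCcpt.measure_lt_top).ne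
  have hvD : 0 < volume.real D := ENNReal.toReal_pos
    ((isOpen_interior.measure_pos volume ⟨x₀, hx₀⟩).trans_le (measure_mono interior_subset)).ne'
    hDcpt.measure_lt_top.ne
  set B := 2 ^ 2 * 2 * (diam C + 1) * volume.real D / (r * volume.real (interior C))
  refine ⟨3 * B / Real.log 2, by positivity, fun n hn v μ hμ hsub hdisj htouch => ?_⟩
  simp only [image_add_smul_eq_vadd_smul] at hsub hdisj htouch
  have hclass : ∀ q > 0, ∑ i with q / 2 < μ i ∧ μ i ≤ q, μ i ≤ B := fun q hq => by
    simpa [finrank_euclideanSpace_fin] using hDconv.sum_pow_le_of_frontier_touching volume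
      hDcpt.measure_lt_top.ne hr hball hCcpt.isBounded hc hq (fun i hi => (mem_filter.1 hi).2)
      (fun i _ => hsub i) (fun i _ j _ hij => hdisj i j hij) (fun i _ => htouch i)
  calc ∑ i, μ i ≤ (Nat.clog 2 n + 1) * B := by
        simpa using univ.sum_le_clog_add_one_mul μ (fun i _ => hμ i) hclass
    _ ≤ 3 * Real.logb 2 n * B := by
        gcongr
        exact Nat.clog_two_add_one_le_three_mul_logb hn
    _ = 3 * B / Real.log 2 * Real.log n := by
        rw [Real.logb]
        ring
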